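/- Let K ⊆ L be a field extension and suppose L is a finitely generated field extension of K of transcendence degree 1 such that K is algebraically closed in L (i.e. every element of L algebraic over K lies in K). If K has characteristic p > 0 and K is perfect, then L is a separable extension of K, i.e. there exists a transcendence basis t of L over K such that L is a finite separable extension of K(t). -/

import Mathlib

/-!
Every finitely generated extension of a perfect field is separably generated. In transcendence
degree one the separating transcendence basis is a single element `t`, and `L` is then finitely
generated and algebraic, hence finite, over `K(t)`.
-/

open IntermediateField

lemma IsTranscendenceBasis.exists_finset_eq_singleton {R A : Type*} [CommRing R] [CommRing A]
    [Algebra R A] [Nontrivial R] [NoZeroDivisors A] {s : Finset A} {x : A}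
    (hs : IsTranscendenceBasis R ((↑) : s → A)) (hx : IsTranscendenceBasis R fun _ : Unit => x) :
    ∃ t, s = {t} :=
  Finset.card_eq_one.mp <| by simpa using hs.lift_cardinalMk_eq hx

theorem stmt_2_general (K L : Type*) [Field K] [Field L] [Algebra K L]
    [PerfectField K]
    (hfg : ∃ S : Finset L, IntermediateField.adjoin K (S : Set L) = ⊤)
    (htr : ∃ x : L, IsTranscendenceBasis K (fun _ : Unit => x)) :
    ∃ t : L, IsTranscendenceBasis K (fun _ : Unit => t) ∧
      FiniteDimensional ↥(IntermediateField.adjoin K ({t} : Set L)) L ∧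
      Algebra.IsSeparable ↥(IntermediateField.adjoin K ({t} : Set L)) L := by
  have : Algebra.EssFiniteType K L := fg_top_iff.mp hfg
  obtain ⟨s, hs, hsep⟩ := exists_isTranscendenceBasis_and_isSeparable_of_perfectField K L
  obtain ⟨x, hx⟩ := htr
  obtain ⟨t, rfl⟩ := hs.exists_finset_eq_singleton hx
  rw [Finset.coe_singleton] at hsep
  have : Algebra.EssFiniteType K⟮t⟯ L := .of_comp K _ _
  exact ⟨t, hs.comp_equiv (Equiv.ofUnique _ _),
    Algebra.finite_of_essFiniteType_of_isAlgebraic, hsep⟩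

/-- MacLane's theorem (field-theoretic form): a finitely generated field extension `L/K`
of transcendence degree `1` with `K` algebraically closed in `L`, `K` perfect of
characteristic `p > 0`, is separably generated: there is a transcendence basis `t` such
that `L` is finite and separable over `K(t)`. -/
theorem stmt_2 (p : ℕ) [Fact p.Prime] (K L : Type*) [Field K] [Field L] [Algebra K L]
    [CharP K p] [PerfectField K]
    (hfg : ∃ S : Finset L, IntermediateField.adjoin K (S : Set L) = ⊤)
    (htr : ∃ x : L, IsTranscendenceBasis K (fun _ : Unit => x))
    (hclosed : ∀ x : L, IsAlgebraic K x → x ∈ (algebraMap K L).range) :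
    ∃ t : L, IsTranscendenceBasis K (fun _ : Unit => t) ∧
      FiniteDimensional ↥(IntermediateField.adjoin K ({t} : Set L)) L ∧
      Algebra.IsSeparable ↥(IntermediateField.adjoin K ({t} : Set L)) L :=
  stmt_2_general K L hfg htr
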